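/- arXiv:2006.05335 — 3 statements merged into one kernel-verified Lean document; each statement's English description precedes it below -/
import Mathlib

section
/- Let λ ∈ C⁰([0,T]; [0,∞)) with ∫₀ᵀ λ(t) dt > L, and let y₀* ∈ C¹(ℝ) be supported in [−η, L+η] where 0 < η < L/2 and ∫₀ᵀ λ(t) dt > L + 2η. Let z* ∈ C⁰([0,T]; C¹_b(ℝ)) satisfy ‖z*‖_{C⁰([0,T];C⁰_b(ℝ))} ≤ η/T, and let Φ* be the flow of ξ' = λ(t) + z*(t, ξ). Then the function y(t, x̄) := y₀*(Φ*(t; 0, x̄)) is C¹, solves y_t + (λ(t) + z*(t,x)) y_x = 0 with y(0,·) = y₀*, and satisfies y(T, x) = 0 for all x ∈ [0, L]. -/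
/-!
Along a characteristic τ ↦ Φ(t; τ, x) the function y(τ, ·) = y₀*(Φ*(τ; 0, ·)) is constant, because
by uniqueness for the Lipschitz ODE the flow satisfies Φ*(τ; 0, Φ*(t; τ, x)) = Φ*(t; 0, x).
Differentiating this constant along the characteristic gives the transport equation.
For the null state, integrating ξ' = λ + z*(·, ξ) backwards from x at time T moves ξ by at least
∫₀ᵀ λ − T · η/T > L + η, so Φ*(T; 0, x) < x − L − η ≤ −η lies outside the support of y₀*.
-/

open Set
open scoped Topology NNReal

section Uniqueness

variable {E : Type*} [NormedAddCommGroup E] [NormedSpace ℝ E]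
  {v : ℝ → E → E} {K : ℝ≥0} {a b : ℝ}

theorem eqOn_Icc_of_hasDerivWithinAt_of_lipschitzWith
    (hv : ∀ t ∈ Icc a b, LipschitzWith K (v t)) {f g : ℝ → E}
    (hf : ∀ t ∈ Icc a b, HasDerivWithinAt f (v t (f t)) (Icc a b) t)
    (hg : ∀ t ∈ Icc a b, HasDerivWithinAt g (v t (g t)) (Icc a b) t)
    {t₀ : ℝ} (ht₀ : t₀ ∈ Icc a b) (heq : f t₀ = g t₀) :
    EqOn f g (Icc a b) := by
  have hfc : ContinuousOn f (Icc a b) := fun t ht => (hf t ht).continuousWithinAt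
  have hgc : ContinuousOn g (Icc a b) := fun t ht => (hg t ht).continuousWithinAt
  rw [← Icc_union_Icc_eq_Icc ht₀.1 ht₀.2]
  refine EqOn.union ?_ ?_
  · have hsub : Icc a t₀ ⊆ Icc a b := Icc_subset_Icc_right ht₀.2
    have hnhds : ∀ t ∈ Ioc a t₀, Icc a b ∈ 𝓝[≤] t := fun t ht =>
      Icc_mem_nhdsLE_of_mem ⟨ht.1, ht.2.trans ht₀.2⟩
    exact ODE_solution_unique_of_mem_Icc_left (s := fun _ => univ)
      (fun t ht => (hv t (hsub (Ioc_subset_Icc_self ht))).lipschitzOnWith)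
      (hfc.mono hsub)
      (fun t ht => (hf t (hsub (Ioc_subset_Icc_self ht))).mono_of_mem_nhdsWithin (hnhds t ht))
      (fun _ _ => mem_univ _) (hgc.mono hsub)
      (fun t ht => (hg t (hsub (Ioc_subset_Icc_self ht))).mono_of_mem_nhdsWithin (hnhds t ht))
      (fun _ _ => mem_univ _) heq
  · have hsub : Icc t₀ b ⊆ Icc a b := Icc_subset_Icc_left ht₀.1
    have hnhds : ∀ t ∈ Ico t₀ b, Icc a b ∈ 𝓝[≥] t := fun t ht =>
      Icc_mem_nhdsGE_of_mem ⟨ht₀.1.trans ht.1, ht.2⟩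
    exact ODE_solution_unique_of_mem_Icc_right (s := fun _ => univ)
      (fun t ht => (hv t (hsub (Ico_subset_Icc_self ht))).lipschitzOnWith)
      (hfc.mono hsub)
      (fun t ht => (hf t (hsub (Ico_subset_Icc_self ht))).mono_of_mem_nhdsWithin (hnhds t ht))
      (fun _ _ => mem_univ _) (hgc.mono hsub)
      (fun t ht => (hg t (hsub (Ico_subset_Icc_self ht))).mono_of_mem_nhdsWithin (hnhds t ht))
      (fun _ _ => mem_univ _) heq

theorem flow_apply_flow (hv : ∀ t ∈ Icc a b, LipschitzWith K (v t)) {Φ : ℝ → ℝ → E → E}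
    (hΦ : ∀ s ∈ Icc a b, ∀ x, Φ s s x = x ∧
      ∀ t ∈ Icc a b, HasDerivWithinAt (fun τ => Φ s τ x) (v t (Φ s t x)) (Icc a b) t)
    {s τ σ : ℝ} (hs : s ∈ Icc a b) (hτ : τ ∈ Icc a b) (hσ : σ ∈ Icc a b) (x : E) :
    Φ τ σ (Φ s τ x) = Φ s σ x :=
  eqOn_Icc_of_hasDerivWithinAt_of_lipschitzWith hv (hΦ τ hτ _).2 (hΦ s hs x).2 hτ
    (hΦ τ hτ _).1 hσ

end Uniqueness

theorem exists_hasDerivAt_add_mul_eq_zero_of_eventually_const_along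
    {F : ℝ × ℝ → ℝ} {γ : ℝ → ℝ} {t x c : ℝ} (hF : DifferentiableAt ℝ F (t, x))
    (hγ : HasDerivAt γ c t) (hγt : γ t = x) (hconst : ∀ᶠ τ in 𝓝 t, F (τ, γ τ) = F (t, x)) :
    ∃ a b : ℝ, HasDerivAt (fun τ => F (τ, x)) a t ∧ HasDerivAt (fun ξ => F (t, ξ)) b x ∧
      a + c * b = 0 := by
  set D := fderiv ℝ F (t, x)
  have hD : HasFDerivAt F D (t, x) := hF.hasFDerivAt
  refine ⟨D (1, 0), D (0, 1),
    hD.comp_hasDerivAt t ((hasDerivAt_id t).prodMk (hasDerivAt_const t x)),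
    hD.comp_hasDerivAt x ((hasDerivAt_const x t).prodMk (hasDerivAt_id x)), ?_⟩
  have halong : HasDerivAt (fun τ => F (τ, γ τ)) (D (1, c)) t := by
    have hcurve := (hasDerivAt_id t).prodMk hγ
    rw [← hγt] at hD
    exact hD.comp_hasDerivAt t hcurve
  have hzero : D (1, c) = 0 :=
    halong.unique ((hasDerivAt_const t (F (t, x))).congr_of_eventuallyEq hconst)
  calc D (1, 0) + c * D (0, 1) = D ((1, 0) + c • (0, 1)) := by
        rw [map_add, map_smul, smul_eq_mul]
    _ = 0 := by simpa using hzero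

theorem integral_sub_le_sub_of_hasDerivWithinAt {lam g ξ : ℝ → ℝ} {a b M : ℝ} (hab : a ≤ b)
    (hlam : ContinuousOn lam (Icc a b)) (hg : ContinuousOn g (Icc a b))
    (hgM : ∀ t ∈ Icc a b, -M ≤ g t)
    (hξ : ∀ t ∈ Icc a b, HasDerivWithinAt ξ (lam t + g t) (Icc a b) t) :
    (∫ t in a..b, lam t) - M * (b - a) ≤ ξ b - ξ a := by
  rw [← uIcc_of_le hab] at hlam hg
  have hlamint := hlam.intervalIntegrable (μ := MeasureTheory.volume)
  have hgint := hg.intervalIntegrable (μ := MeasureTheory.volume)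
  have hftc : ∫ t in a..b, (lam t + g t) = ξ b - ξ a :=
    intervalIntegral.integral_eq_sub_of_hasDeriv_right_of_le hab
      (fun t ht => (hξ t ht).continuousWithinAt)
      (fun t ht => (hξ t (Ioo_subset_Icc_self ht)).mono_of_mem_nhdsWithin
        (Icc_mem_nhdsGT_of_mem ⟨ht.1.le, ht.2⟩))
      (hlamint.add hgint)
  have hglow : -M * (b - a) ≤ ∫ t in a..b, g t := by
    simpa [mul_comm] using intervalIntegral.integral_mono_on hab intervalIntegrable_const hgint hgM
  rw [← hftc, intervalIntegral.integral_add hlamint hgint]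
  linarith

theorem return_method_transport_null_state_general
    (T L η : ℝ) (hT : 0 < T)
    (lam : ℝ → ℝ) (hlamc : ContinuousOn lam (Icc 0 T))
    (hlamint : L + 2 * η < ∫ t in (0:ℝ)..T, lam t)
    (y0 : ℝ → ℝ) (hy0 : ContDiff ℝ 1 y0) (hy0supp : tsupport y0 ⊆ Icc (-η) (L + η))
    (z : ℝ → ℝ → ℝ) (K : NNReal)
    (hzc : ContinuousOn (fun p : ℝ × ℝ => z p.1 p.2) (Icc 0 T ×ˢ univ))
    (hzlip : ∀ t ∈ Icc 0 T, LipschitzWith K (z t))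
    (hzb : ∀ t ∈ Icc 0 T, ∀ x : ℝ, |z t x| ≤ η / T)
    (Φ : ℝ → ℝ → ℝ → ℝ)
    (hΦ : ∀ s ∈ Icc 0 T, ∀ x : ℝ, Φ s s x = x ∧
      ∀ t ∈ Icc 0 T,
        HasDerivWithinAt (fun τ => Φ s τ x) (lam t + z t (Φ s t x)) (Icc 0 T) t)
    (hΦC1 : ContDiffOn ℝ 1 (fun p : ℝ × ℝ × ℝ => Φ p.1 p.2.1 p.2.2)
      (Icc 0 T ×ˢ Icc 0 T ×ˢ univ)) :
    -- with y(t,x) := y₀*(Φ*(t;0,x)):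
    ContDiffOn ℝ 1 (fun p : ℝ × ℝ => y0 (Φ p.1 0 p.2)) (Icc 0 T ×ˢ univ) ∧
    (∀ x : ℝ, y0 (Φ 0 0 x) = y0 x) ∧
    (∀ t ∈ Ioo 0 T, ∀ x : ℝ, ∃ a b : ℝ,
      HasDerivAt (fun τ => y0 (Φ τ 0 x)) a t ∧
      HasDerivAt (fun ξ => y0 (Φ t 0 ξ)) b x ∧
      a + (lam t + z t x) * b = 0) ∧
    (∀ x ∈ Icc 0 L, y0 (Φ T 0 x) = 0) := by
  have h0 : (0 : ℝ) ∈ Icc 0 T := left_mem_Icc.2 hT.le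
  have hT' : T ∈ Icc 0 T := right_mem_Icc.2 hT.le
  have hv : ∀ t ∈ Icc 0 T, LipschitzWith K (fun ξ => lam t + z t ξ) := fun t ht =>
    LipschitzWith.of_dist_le_mul fun a b => by
      simpa only [dist_add_left] using (hzlip t ht).dist_le_mul a b
  have hC1 : ContDiffOn ℝ 1 (fun p : ℝ × ℝ => y0 (Φ p.1 0 p.2)) (Icc 0 T ×ˢ univ) :=
    hy0.comp_contDiffOn <| hΦC1.comp
      (contDiff_fst.prodMk (contDiff_const.prodMk contDiff_snd)).contDiffOn
      fun p hp => ⟨hp.1, h0, mem_univ _⟩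
  refine ⟨hC1, fun x => by rw [(hΦ 0 h0 x).1], fun t ht x => ?_, fun x hx => ?_⟩
  · have htI : t ∈ Icc 0 T := Ioo_subset_Icc_self ht
    have hnhds : Icc 0 T ∈ 𝓝 t := Icc_mem_nhds ht.1 ht.2
    refine exists_hasDerivAt_add_mul_eq_zero_of_eventually_const_along
      (γ := fun τ => Φ t τ x) (F := fun p => y0 (Φ p.1 0 p.2))
      ((hC1.differentiableOn one_ne_zero (t, x) ⟨htI, mem_univ _⟩).differentiableAt
        (prod_mem_nhds hnhds Filter.univ_mem))
      (by simpa only [(hΦ t htI x).1] using ((hΦ t htI x).2 t htI).hasDerivAt hnhds)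
      (hΦ t htI x).1 ?_
    filter_upwards [hnhds] with τ hτ
    rw [flow_apply_flow hv hΦ htI hτ h0]
  · have hcharacteristic : ContinuousOn (fun t => z t (Φ T t x)) (Icc 0 T) :=
      hzc.comp (continuousOn_id.prodMk fun t ht => ((hΦ T hT' x).2 t ht).continuousWithinAt)
        fun t ht => ⟨ht, mem_univ _⟩
    have hdisp := integral_sub_le_sub_of_hasDerivWithinAt hT.le hlamc hcharacteristic
      (fun t ht => neg_le_of_abs_le (hzb t ht _)) (hΦ T hT' x).2
    rw [(hΦ T hT' x).1, sub_zero, div_mul_cancel₀ η hT.ne'] at hdisp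
    refine image_eq_zero_of_notMem_tsupport fun hmem => ?_
    linarith [(hy0supp hmem).1, hx.2]

/-- the function `y(t,x) := y₀*(Φ*(t;0,x))` built from the flow `Φ*` of
`ξ' = λ(t) + z*(t,ξ)` is C¹, solves the transport equation
`y_t + (λ(t)+z*(t,x)) y_x = 0` with initial datum `y₀*`, and vanishes at time `T`
on `[0,L]`, provided `∫₀ᵀ λ > L + 2η`, `supp y₀* ⊆ [−η, L+η]` and `‖z*‖∞ ≤ η/T`. -/
theorem return_method_transport_null_state
    (T L η : ℝ) (hT : 0 < T) (hL : 0 < L) (hη : 0 < η) (hηL : η < L / 2)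
    (lam : ℝ → ℝ) (hlamc : ContinuousOn lam (Icc 0 T))
    (hlampos : ∀ t ∈ Icc 0 T, 0 ≤ lam t)
    (hlamint : L + 2 * η < ∫ t in (0:ℝ)..T, lam t)
    (y0 : ℝ → ℝ) (hy0 : ContDiff ℝ 1 y0) (hy0supp : tsupport y0 ⊆ Icc (-η) (L + η))
    (z : ℝ → ℝ → ℝ) (K : NNReal)
    (hzc : ContinuousOn (fun p : ℝ × ℝ => z p.1 p.2) (Icc 0 T ×ˢ univ))
    (hzlip : ∀ t ∈ Icc 0 T, LipschitzWith K (z t))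
    (hzb : ∀ t ∈ Icc 0 T, ∀ x : ℝ, |z t x| ≤ η / T)
    (Φ : ℝ → ℝ → ℝ → ℝ)
    (hΦ : ∀ s ∈ Icc 0 T, ∀ x : ℝ, Φ s s x = x ∧
      ∀ t ∈ Icc 0 T,
        HasDerivWithinAt (fun τ => Φ s τ x) (lam t + z t (Φ s t x)) (Icc 0 T) t)
    (hΦC1 : ContDiffOn ℝ 1 (fun p : ℝ × ℝ × ℝ => Φ p.1 p.2.1 p.2.2)
      (Icc 0 T ×ˢ Icc 0 T ×ˢ univ)) :
    -- with y(t,x) := y₀*(Φ*(t;0,x)):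
    ContDiffOn ℝ 1 (fun p : ℝ × ℝ => y0 (Φ p.1 0 p.2)) (Icc 0 T ×ˢ univ) ∧
    (∀ x : ℝ, y0 (Φ 0 0 x) = y0 x) ∧
    (∀ t ∈ Ioo 0 T, ∀ x : ℝ, ∃ a b : ℝ,
      HasDerivAt (fun τ => y0 (Φ τ 0 x)) a t ∧
      HasDerivAt (fun ξ => y0 (Φ t 0 ξ)) b x ∧
      a + (lam t + z t x) * b = 0) ∧
    (∀ x ∈ Icc 0 L, y0 (Φ T 0 x) = 0) :=
  return_method_transport_null_state_general T L η hT lam hlamc hlamint y0 hy0 hy0supp z K hzc hzlip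
    hzb Φ hΦ hΦC1
end

section
/- Let α > 0 and let z solve z − α² z_xx = h on (0,L) with boundary values z(0) = h(0), z(L) = h(L), where h ∈ C^{0,1}([0,L]). Then z_x satisfies ‖z_x‖_{L^∞(0,L)} ≤ Lip(h), the Lipschitz constant of h. -/
/-!
A function `u - v` with `u - c u'' ≤ v - c v''` (`c ≥ 0`) cannot have a positive interior
maximum, since there `u'' - v'' ≤ 0`. Comparing `z` with the affine barriers `h 0 ± K x` and
`h L ± K (L - x)` bounds it near the endpoints. Comparing the translate `z (· + δ)` with
`z + K δ` on `[0, L - δ]`, where these barriers control the boundary values, shows that `z` is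
`K`-Lipschitz, and a Lipschitz function has derivative bounded by its constant.
-/

open Set Filter Topology

theorem IsLocalMax.nonpos_of_hasDerivAt_deriv {f f' : ℝ → ℝ} {p f'' : ℝ} (hmax : IsLocalMax f p)
    (hf : ∀ᶠ y in 𝓝 p, HasDerivAt f (f' y) y) (hf' : HasDerivAt f' f'' p) : f'' ≤ 0 := by
  by_contra! hpos
  have hp : f' p = 0 := hmax.hasDerivAt_eq_zero hf.self_of_nhds
  have hslope : ∀ᶠ y in 𝓝[>] p, 0 < slope f' p y :=
    nhdsGT_le_nhdsNE p ((hasDerivAt_iff_tendsto_slope.1 hf').eventually (eventually_gt_nhds hpos))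
  obtain ⟨q, hpq, hq⟩ := (nhdsGT_basis_Ioc p).eventually_iff.1
    (hslope.and (nhdsWithin_le_nhds (Filter.Eventually.and hmax hf)))
  have hcont : ContinuousOn f (Icc p q) := fun y hy =>
    (hy.1.eq_or_lt.elim (fun h => h ▸ hf.self_of_nhds) (fun h => (hq ⟨h, hy.2⟩).2.2)
      ).continuousAt.continuousWithinAt
  obtain ⟨ξ, hξ, hξeq⟩ := exists_hasDerivAt_eq_slope f f' hpq hcont
    fun y hy => (hq (Ioo_subset_Ioc_self hy)).2.2
  have hξpos : 0 < f' ξ := by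
    have := (hq (Ioo_subset_Ioc_self hξ)).1
    rwa [slope_def_field, hp, sub_zero, div_pos_iff_of_pos_right (sub_pos.2 hξ.1)] at this
  have hfq : f q ≤ f p := (hq (right_mem_Ioc.2 hpq)).2.1
  rw [hξeq, div_pos_iff_of_pos_right (sub_pos.2 hpq)] at hξpos
  linarith

theorem le_of_sub_smul_deriv2_le {a b c : ℝ} {u u' u'' v v' v'' : ℝ → ℝ} (hc : 0 ≤ c)
    (hu : ContinuousOn u (Icc a b)) (hu' : ∀ x ∈ Ioo a b, HasDerivAt u (u' x) x)
    (hu'' : ∀ x ∈ Ioo a b, HasDerivAt u' (u'' x) x)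
    (hv : ContinuousOn v (Icc a b)) (hv' : ∀ x ∈ Ioo a b, HasDerivAt v (v' x) x)
    (hv'' : ∀ x ∈ Ioo a b, HasDerivAt v' (v'' x) x)
    (hle : ∀ x ∈ Ioo a b, u x - c * u'' x ≤ v x - c * v'' x) (ha : u a ≤ v a) (hb : u b ≤ v b) :
    ∀ x ∈ Icc a b, u x ≤ v x := by
  intro x hx
  obtain ⟨p, hp, hmax⟩ := isCompact_Icc.exists_isMaxOn ⟨x, hx⟩ (hu.sub hv)
  suffices u p - v p ≤ 0 by
    have hxp : u x - v x ≤ u p - v p := hmax hx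
    linarith
  by_contra! hpos
  have hp : p ∈ Ioo a b :=
    ⟨hp.1.lt_of_ne (by rintro rfl; linarith), hp.2.lt_of_ne (by rintro rfl; linarith)⟩
  have hnhds : Ioo a b ∈ 𝓝 p := Ioo_mem_nhds hp.1 hp.2
  have h2 : u'' p - v'' p ≤ 0 :=
    (hmax.isLocalMax (mem_of_superset hnhds Ioo_subset_Icc_self)).nonpos_of_hasDerivAt_deriv
      (eventually_of_mem hnhds fun y hy => (hu' y hy).sub (hv' y hy)) ((hu'' p hp).sub (hv'' p hp))
  nlinarith [hle p hp, mul_nonpos_of_nonneg_of_nonpos hc h2]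

structure IsEllipticFilter (c a b : ℝ) (h z z' z'' : ℝ → ℝ) : Prop where
  continuousOn : ContinuousOn z (Icc a b)
  hasDerivAt : ∀ x ∈ Ioo a b, HasDerivAt z (z' x) x
  hasDerivAt_deriv : ∀ x ∈ Ioo a b, HasDerivAt z' (z'' x) x
  sub_smul_deriv2 : ∀ x ∈ Ioo a b, z x - c * z'' x = h x
  left : z a = h a
  right : z b = h b

namespace IsEllipticFilter

variable {a b c : ℝ} {h z z' z'' : ℝ → ℝ} {K : NNReal}

theorem neg (hz : IsEllipticFilter c a b h z z' z'') :
    IsEllipticFilter c a b (-h) (-z) (-z') (-z'') where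
  continuousOn := hz.continuousOn.neg
  hasDerivAt x hx := (hz.hasDerivAt x hx).neg
  hasDerivAt_deriv x hx := (hz.hasDerivAt_deriv x hx).neg
  sub_smul_deriv2 x hx := by simp only [Pi.neg_apply]; linarith [hz.sub_smul_deriv2 x hx]
  left := by simp only [Pi.neg_apply, hz.left]
  right := by simp only [Pi.neg_apply, hz.right]

theorem le_of_le_affine (hz : IsEllipticFilter c a b h z z' z'') (hc : 0 ≤ c) {m q : ℝ}
    (hh : ∀ x ∈ Icc a b, h x ≤ m * x + q) : ∀ x ∈ Icc a b, z x ≤ m * x + q := fun x hx =>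
  have hab : a ≤ b := hx.1.trans hx.2
  le_of_sub_smul_deriv2_le (v' := fun _ => m) (v'' := fun _ => 0) hc hz.continuousOn
    hz.hasDerivAt hz.hasDerivAt_deriv (by fun_prop)
    (fun x _ => ((hasDerivAt_id x).const_mul m).add_const q |>.congr_deriv (mul_one m))
    (fun x _ => hasDerivAt_const x m)
    (fun x hx => by
      rw [hz.sub_smul_deriv2 x hx, mul_zero, sub_zero]
      exact hh x (Ioo_subset_Icc_self hx))
    (hz.left ▸ hh a (left_mem_Icc.2 hab)) (hz.right ▸ hh b (right_mem_Icc.2 hab)) x hx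

theorem le_add_mul_sub_left (hz : IsEllipticFilter c a b h z z' z'') (hc : 0 ≤ c)
    (hh : LipschitzOnWith K h (Icc a b)) : ∀ x ∈ Icc a b, z x ≤ h a + K * (x - a) := by
  intro x hx
  have hbound := hz.le_of_le_affine hc (m := K) (q := h a - K * a) (fun y hy => by
    have := hh.le_add_mul hy (left_mem_Icc.2 (hx.1.trans hx.2))
    rw [Real.dist_eq, abs_of_nonneg (sub_nonneg.2 hy.1)] at this
    linarith) x hx
  linarith

theorem le_add_mul_sub_right (hz : IsEllipticFilter c a b h z z' z'') (hc : 0 ≤ c)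
    (hh : LipschitzOnWith K h (Icc a b)) : ∀ x ∈ Icc a b, z x ≤ h b + K * (b - x) := by
  intro x hx
  have hbound := hz.le_of_le_affine hc (m := -K) (q := h b + K * b) (fun y hy => by
    have := hh.le_add_mul hy (right_mem_Icc.2 (hx.1.trans hx.2))
    rw [Real.dist_eq, abs_of_nonpos (sub_nonpos.2 hy.2)] at this
    linarith) x hx
  linarith

theorem apply_add_le (hz : IsEllipticFilter c a b h z z' z'') (hc : 0 ≤ c)
    (hh : LipschitzOnWith K h (Icc a b)) {δ : ℝ} (hδ : 0 ≤ δ) :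
    ∀ x ∈ Icc a (b - δ), z (x + δ) ≤ z x + K * δ := by
  intro x hx
  have hab : a + δ ≤ b := by linarith [hx.1, hx.2]
  have hshift : ∀ t ∈ Icc a (b - δ), t + δ ∈ Icc a b ∧ t ∈ Icc a b := fun t ht =>
    ⟨⟨by linarith [ht.1], by linarith [ht.2]⟩, ⟨ht.1, by linarith [ht.2]⟩⟩
  have hshift' : ∀ t ∈ Ioo a (b - δ), t + δ ∈ Ioo a b ∧ t ∈ Ioo a b := fun t ht =>
    ⟨⟨by linarith [ht.1], by linarith [ht.2]⟩, ⟨ht.1, by linarith [ht.2]⟩⟩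
  refine le_of_sub_smul_deriv2_le (u := fun t => z (t + δ)) (v := fun t => z t + K * δ) hc
    (hz.continuousOn.comp (continuous_add_const δ).continuousOn fun t ht => (hshift t ht).1)
    (fun t ht => (hz.hasDerivAt _ (hshift' t ht).1).comp_add_const t δ)
    (fun t ht => (hz.hasDerivAt_deriv _ (hshift' t ht).1).comp_add_const t δ)
    ((hz.continuousOn.mono fun t ht => (hshift t ht).2).add continuousOn_const)
    (fun t ht => (hz.hasDerivAt t (hshift' t ht).2).add_const _)
    (fun t ht => hz.hasDerivAt_deriv t (hshift' t ht).2) (fun t ht => ?_) ?_ ?_ x hx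
  · obtain ⟨htδ, ht'⟩ := hshift t (Ioo_subset_Icc_self ht)
    have hlip := hh.le_add_mul htδ ht'
    rw [Real.dist_eq, add_sub_cancel_left, abs_of_nonneg hδ] at hlip
    linarith [hz.sub_smul_deriv2 _ (hshift' t ht).1, hz.sub_smul_deriv2 _ (hshift' t ht).2]
  · have hleft := hz.le_add_mul_sub_left hc hh (a + δ) ⟨by linarith, hab⟩
    rw [hz.left]
    linarith
  · have hright := hz.neg.le_add_mul_sub_right hc hh.neg (b - δ) ⟨by linarith, by linarith⟩
    simp only [Pi.neg_apply, sub_add_cancel, hz.right] at hright ⊢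
    linarith

theorem lipschitzOnWith (hz : IsEllipticFilter c a b h z z' z'') (hc : 0 ≤ c)
    (hh : LipschitzOnWith K h (Icc a b)) : LipschitzOnWith K z (Icc a b) := by
  refine LipschitzOnWith.of_le_add_mul K fun x hx y hy => ?_
  rcases le_total x y with hxy | hyx
  · have := hz.neg.apply_add_le hc hh.neg (sub_nonneg.2 hxy) x ⟨hx.1, by linarith [hy.2]⟩
    simp only [Pi.neg_apply, add_sub_cancel] at this
    rw [Real.dist_eq, abs_of_nonpos (sub_nonpos.2 hxy)]
    linarith
  · have := hz.apply_add_le hc hh (sub_nonneg.2 hyx) y ⟨hy.1, by linarith [hx.2]⟩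
    rw [add_sub_cancel] at this
    rw [Real.dist_eq, abs_of_nonneg (sub_nonneg.2 hyx)]
    linarith

end IsEllipticFilter

theorem elliptic_filter_gradient_estimate_general
    (L α : ℝ)
    (z z' z'' h : ℝ → ℝ) (K : NNReal)
    (hh : LipschitzOnWith K h (Icc 0 L))
    (hzc : ContinuousOn z (Icc 0 L))
    (hz1 : ∀ x ∈ Ioo 0 L, HasDerivAt z (z' x) x)
    (hz2 : ∀ x ∈ Ioo 0 L, HasDerivAt z' (z'' x) x)
    (heq : ∀ x ∈ Ioo 0 L, z x - α ^ 2 * z'' x = h x)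
    (hbl : z 0 = h 0) (hbr : z L = h L) :
    ∀ x ∈ Ioo 0 L, |z' x| ≤ K := by
  have hz : IsEllipticFilter (α ^ 2) 0 L h z z' z'' := ⟨hzc, hz1, hz2, heq, hbl, hbr⟩
  intro x hx
  simpa only [Real.norm_eq_abs] using (hz1 x hx).le_of_lipschitzOn (Icc_mem_nhds hx.1 hx.2)
    (hz.lipschitzOnWith (sq_nonneg α) hh)

/-- if `z - α² z'' = h` on `(0,L)` with `z(0) = h(0)`, `z(L) = h(L)` and
`h` Lipschitz on `[0,L]` with constant `K`, then `‖z_x‖_{L^∞(0,L)} ≤ K`. -/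
theorem elliptic_filter_gradient_estimate
    (L α : ℝ) (hL : 0 < L) (hα : 0 < α)
    (z z' z'' h : ℝ → ℝ) (K : NNReal)
    (hh : LipschitzOnWith K h (Icc 0 L))
    (hzc : ContinuousOn z (Icc 0 L))
    (hz'c : ContinuousOn z' (Ioo 0 L))
    (hz1 : ∀ x ∈ Ioo 0 L, HasDerivAt z (z' x) x)
    (hz2 : ∀ x ∈ Ioo 0 L, HasDerivAt z' (z'' x) x)
    (heq : ∀ x ∈ Ioo 0 L, z x - α ^ 2 * z'' x = h x)
    (hbl : z 0 = h 0) (hbr : z L = h L) :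
    ∀ x ∈ Ioo 0 L, |z' x| ≤ K :=
  elliptic_filter_gradient_estimate_general L α z z' z'' h K hh hzc hz1 hz2 heq hbl hbr
end

section
/- Let α > 0, z^α ∈ L^∞((0,T)×(0,L)), and let u solve u_t − u_xx + z^α u_x = −v ŷ_x on (0,T)×(0,L) with homogeneous Dirichlet boundary conditions and u(0,·) = 0, where v solves v − α² v_xx = u with homogeneous Dirichlet boundary data, and ŷ ∈ L²(0,T; H²(0,L)). Then u ≡ 0 and v ≡ 0. -/
/-!
Fix `ε > 0` and let `w t = ε * exp (t + Φ t)`, where `Φ` is continuous and its left difference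
quotients at every `t` eventually dominate `a t` (a primitive of a lower semicontinuous integrable
majorant of `a`, given by Vitali–Carathéodory); `exp Φ` plays the role of the Grönwall weight.
At the first time `t₀` at which `|u|` reaches `w`, the touching point `x₀` is an interior spatial
maximum of `σ u` (`σ = ±1`), so `σ u_x = 0` and `σ u_xx ≤ 0` there, and the maximum principle for
`v - α² v_xx = u` gives `|v t₀| ≤ w t₀`. The equation then gives `σ u_t ≤ w t₀ * a t₀`, while
touching `w` from below forces `σ u_t ≥ w t₀ * (1 + a t₀)`. Hence `|u| ≤ ε * exp (t + Φ t)` for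
every `ε`, so `u = 0`; then `v = 0` by the elliptic maximum principle, and both extend to
`t = 0, T` by continuity.
-/

open Set MeasureTheory Filter Topology Real

theorem IsLocalMax.hasDerivAt_deriv_nonpos {f : ℝ → ℝ} {x c : ℝ} (hmax : IsLocalMax f x)
    (hf : ContinuousAt f x) (hc : HasDerivAt (deriv f) c x) : c ≤ 0 := by
  by_contra! hpos
  have hmin : IsLocalMin f x :=
    isLocalMin_of_deriv_deriv_pos (hc.deriv ▸ hpos) hmax.deriv_eq_zero hf
  have hconst : f =ᶠ[𝓝 x] fun _ => f x := (hmin.and hmax).mono fun y hy => le_antisymm hy.2 hy.1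
  have hderiv : deriv f =ᶠ[𝓝 x] fun _ => 0 :=
    hconst.eventuallyEq_nhds.mono fun y hy => by rw [hy.deriv_eq, deriv_const]
  have := hc.deriv
  rw [hderiv.deriv_eq, deriv_const] at this
  linarith

theorem IsLocalMax.hasDerivAt_nonpos_of_hasDerivAt {f f' : ℝ → ℝ} {x c : ℝ}
    (hmax : IsLocalMax f x) (hf : ∀ᶠ y in 𝓝 x, HasDerivAt f (f' y) y)
    (hc : HasDerivAt f' c x) : c ≤ 0 :=
  hmax.hasDerivAt_deriv_nonpos hf.self_of_nhds.continuousAt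
    (hc.congr_of_eventuallyEq (hf.mono fun _ hy => hy.deriv))

theorem elliptic_max_principle {κ a b C : ℝ} (hκ : 0 ≤ κ) {f g g'' : ℝ → ℝ}
    (hg : ContinuousOn g (Icc a b)) (hg'' : ∀ x ∈ Ioo a b, HasDerivAt (deriv g) (g'' x) x)
    (heq : ∀ x ∈ Ioo a b, g x - κ * g'' x = f x) (hf : ∀ x ∈ Ioo a b, f x ≤ C)
    (ha : g a ≤ C) (hb : g b ≤ C) : ∀ x ∈ Icc a b, g x ≤ C := by
  intro x hx
  obtain ⟨x₀, hx₀, hmax⟩ := isCompact_Icc.exists_isMaxOn ⟨x, hx⟩ hg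
  refine (hmax hx).trans (not_lt.1 fun hC => ?_)
  have hx₀' : x₀ ∈ Ioo a b :=
    ⟨hx₀.1.lt_of_ne (by rintro rfl; linarith), hx₀.2.lt_of_ne (by rintro rfl; linarith)⟩
  have hnhds : Icc a b ∈ 𝓝 x₀ := Icc_mem_nhds hx₀'.1 hx₀'.2
  have hg''_nonpos : g'' x₀ ≤ 0 :=
    (hmax.isLocalMax hnhds).hasDerivAt_deriv_nonpos ((hg x₀ hx₀).continuousAt hnhds)
      (hg'' x₀ hx₀')
  linarith [heq x₀ hx₀', hf x₀ hx₀', mul_nonpos_of_nonneg_of_nonpos hκ hg''_nonpos]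

theorem elliptic_max_principle_abs {κ a b C : ℝ} (hκ : 0 ≤ κ) {f g g'' : ℝ → ℝ}
    (hg : ContinuousOn g (Icc a b)) (hg'' : ∀ x ∈ Ioo a b, HasDerivAt (deriv g) (g'' x) x)
    (heq : ∀ x ∈ Ioo a b, g x - κ * g'' x = f x) (hf : ∀ x ∈ Ioo a b, |f x| ≤ C)
    (ha : |g a| ≤ C) (hb : |g b| ≤ C) : ∀ x ∈ Icc a b, |g x| ≤ C := by
  have hupper := elliptic_max_principle hκ hg hg'' heq (fun x hx => (abs_le.1 (hf x hx)).2)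
    (abs_le.1 ha).2 (abs_le.1 hb).2
  have hlower := elliptic_max_principle (f := -f) (g'' := -g'') hκ hg.neg
    (fun x hx => by rw [deriv.neg']; exact (hg'' x hx).neg)
    (fun x hx => by simp only [Pi.neg_apply]; linarith [heq x hx])
    (fun x hx => neg_le.1 (abs_le.1 (hf x hx)).1) (neg_le.1 (abs_le.1 ha).1)
    (neg_le.1 (abs_le.1 hb).1)
  exact fun x hx => abs_le.2 ⟨neg_le.1 (hlower x hx), hupper x hx⟩

theorem exists_continuous_le_slope_left {f : ℝ → ℝ} (hf : Integrable f) :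
    ∃ Φ : ℝ → ℝ, Continuous Φ ∧ ∀ t, ∀ᶠ s in 𝓝[<] t, f t ≤ slope Φ t s := by
  obtain ⟨g, hfg, hg_lsc, hg_int, hg_top, -⟩ :=
    exists_lt_lowerSemicontinuous_integral_lt f hf one_pos
  set G : ℝ → ℝ := fun x => (g x).toReal
  have hG : ∀ a b, IntervalIntegrable G volume a b := fun _ _ => hg_int.intervalIntegrable
  refine ⟨fun t => ∫ r in 0..t, G r, intervalIntegral.continuous_primitive hG 0, fun t => ?_⟩
  -- A primitive of `f` itself would only do at Lebesgue points of `f`; lower semicontinuity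
  -- keeps the majorant above `c > f t` on a whole neighbourhood of every `t`.
  obtain ⟨c, hfc, hcg⟩ := EReal.lt_iff_exists_real_btwn.1 (hfg t)
  obtain ⟨l, hlt, hl⟩ := exists_Ioc_subset_of_mem_nhds (hg_lsc t c hcg) ⟨t - 1, by linarith⟩
  filter_upwards [Ioo_mem_nhdsLT hlt] with s hs
  have hcG : c * (t - s) ≤ ∫ r in s..t, G r := by
    have := intervalIntegral.integral_mono_ae_restrict hs.2.le intervalIntegrable_const (hG s t)
      (f := fun _ => c) ?_
    · simpa [mul_comm] using this
    filter_upwards [ae_restrict_mem measurableSet_Icc, ae_restrict_of_ae hg_top] with r hr htop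
    have hcr : (c : EReal) < g r := hl ⟨hs.1.trans_le hr.1, hr.2⟩
    simpa using EReal.toReal_le_toReal hcr.le (by simp) htop.ne
  rw [slope_comm, slope_def_field, intervalIntegral.integral_interval_sub_left (hG 0 t) (hG 0 s),
    le_div_iff₀ (sub_pos.2 hs.2)]
  nlinarith [EReal.coe_lt_coe_iff.1 hfc, sub_pos.2 hs.2]

theorem mul_exp_barrier_le_of_hasDerivAt {p Φ : ℝ → ℝ} {t p' A ε : ℝ} (hε : 0 ≤ ε)
    (hp : HasDerivAt p p' t) (hΦc : ContinuousAt Φ t) (hΦ : ∀ᶠ s in 𝓝[<] t, A ≤ slope Φ t s)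
    (hle : ∀ᶠ s in 𝓝[<] t, p s ≤ ε * exp (s + Φ s)) (heq : p t = ε * exp (t + Φ t)) :
    ε * exp (t + Φ t) * (1 + A) ≤ p' := by
  have hw : Tendsto (fun s => ε * exp (s + Φ s) * (1 + A)) (𝓝[<] t)
      (𝓝 (ε * exp (t + Φ t) * (1 + A))) :=
    (((continuousAt_id.add hΦc).rexp.const_mul ε).mul_const _).tendsto.mono_left
      nhdsWithin_le_nhds
  refine le_of_tendsto_of_tendsto hw (hp.tendsto_slope.mono_left (nhdsLT_le_nhdsNE t)) ?_
  filter_upwards [hΦ, hle, self_mem_nhdsWithin] with s hA hps (hst : s < t)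
  have hts : 0 < t - s := sub_pos.2 hst
  rw [slope_comm, slope_def_field, le_div_iff₀ hts] at hA ⊢
  have hexp : exp (s + Φ s) * (t + Φ t - (s + Φ s) + 1) ≤ exp (t + Φ t) := by
    have := mul_le_mul_of_nonneg_left (add_one_le_exp (t + Φ t - (s + Φ s)))
      (exp_pos (s + Φ s)).le
    rwa [← exp_add, add_sub_cancel] at this
  have hwA : ε * exp (s + Φ s) * ((1 + A) * (t - s)) ≤
      ε * exp (s + Φ s) * (t + Φ t - (s + Φ s)) :=
    mul_le_mul_of_nonneg_left (by linarith) (by positivity)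
  nlinarith [mul_le_mul_of_nonneg_left hexp hε]

theorem exists_first_nonneg {β : Type*} [TopologicalSpace β] [T2Space β] {K : Set β}
    (hK : IsCompact K) {a b : ℝ} {F : ℝ → β → ℝ}
    (hF : ContinuousOn (Function.uncurry F) (Icc a b ×ˢ K)) (ha : ∀ x ∈ K, F a x < 0)
    {t₁ : ℝ} {x₁ : β} (ht₁ : t₁ ∈ Icc a b) (hx₁ : x₁ ∈ K) (h₁ : 0 ≤ F t₁ x₁) :
    ∃ t₀ ∈ Ioc a b, (∀ s ∈ Ico a t₀, ∀ x ∈ K, F s x < 0) ∧ (∀ x ∈ K, F t₀ x ≤ 0) ∧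
      ∃ x₀ ∈ K, F t₀ x₀ = 0 := by
  set E := Icc a b ×ˢ K ∩ Function.uncurry F ⁻¹' Ici 0
  have hE : IsCompact E := (isCompact_Icc.prod hK).of_isClosed_subset
    (hF.preimage_isClosed_of_isClosed (isCompact_Icc.prod hK).isClosed isClosed_Ici)
    inter_subset_left
  obtain ⟨⟨t₀, x₀⟩, ⟨⟨ht₀, hx₀⟩, hF₀⟩, hmin⟩ :=
    hE.exists_isMinOn ⟨(t₁, x₁), ⟨ht₁, hx₁⟩, h₁⟩ continuous_fst.continuousOn
  have hbefore : ∀ s ∈ Ico a t₀, ∀ x ∈ K, F s x < 0 := fun s hs x hx => by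
    by_contra! h
    exact (hmin (show (s, x) ∈ E from ⟨⟨⟨hs.1, hs.2.le.trans ht₀.2⟩, hx⟩, h⟩)).not_gt hs.2
  have hat₀ : a < t₀ := ht₀.1.lt_of_ne (by rintro rfl; exact (ha x₀ hx₀).not_ge hF₀)
  have hat : ∀ x ∈ K, F t₀ x ≤ 0 := fun x hx =>
    ContinuousWithinAt.closure_le (by rw [closure_Ico hat₀.ne]; exact right_mem_Icc.2 hat₀.le)
      (((hF.uncurry_right x hx) t₀ ht₀).mono
        (Ico_subset_Icc_self.trans (Icc_subset_Icc_right ht₀.2)))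
      continuousWithinAt_const fun s hs => (hbefore s hs x hx).le
  exact ⟨t₀, ⟨hat₀, ht₀.2⟩, hbefore, hat, x₀, hx₀, le_antisymm (hat x₀ hx₀) hF₀⟩

theorem ContinuousOn.eq_zero_of_eq_zero_on_Ioo_prod {β : Type*} [TopologicalSpace β]
    {a b : ℝ} (hab : a < b) {K : Set β} {F : ℝ → β → ℝ}
    (hF : ContinuousOn (Function.uncurry F) (Icc a b ×ˢ K))
    (h0 : ∀ t ∈ Ioo a b, ∀ x ∈ K, F t x = 0) : ∀ t ∈ Icc a b, ∀ x ∈ K, F t x = 0 := by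
  have hEq : EqOn (Function.uncurry F) 0 (Icc a b ×ˢ K) :=
    EqOn.of_subset_closure (s := Ioo a b ×ˢ K) (fun p hp => h0 p.1 hp.1 p.2 hp.2) hF
      continuousOn_const (prod_mono Ioo_subset_Icc_self subset_rfl)
      (by rw [closure_prod_eq, closure_Ioo hab.ne]; exact prod_mono subset_rfl subset_closure)
  exact fun t ht x hx => hEq (show (t, x) ∈ Icc a b ×ˢ K from ⟨ht, hx⟩)

theorem touching_point_time_deriv_le {L α W A σ ut z y x₀ : ℝ} {U Ux Uxx V Vxx : ℝ → ℝ}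
    (hU' : ∀ x ∈ Ioo 0 L, HasDerivAt U (Ux x) x) (hU'' : ∀ x ∈ Ioo 0 L, HasDerivAt Ux (Uxx x) x)
    (hV : ContinuousOn V (Icc 0 L)) (hV'' : ∀ x ∈ Ioo 0 L, HasDerivAt (deriv V) (Vxx x) x)
    (hell : ∀ x ∈ Ioo 0 L, V x - α ^ 2 * Vxx x = U x) (hV0 : V 0 = 0) (hVL : V L = 0)
    (hUW : ∀ x ∈ Icc 0 L, |U x| ≤ W) (hx₀ : x₀ ∈ Ioo 0 L) (hσ : |σ| = 1) (hσU : σ * U x₀ = W)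
    (hy : |y| ≤ A) (heq : ut - Uxx x₀ + z * Ux x₀ = -(V x₀) * y) :
    σ * ut ≤ W * A := by
  have hW : 0 ≤ W := (abs_nonneg _).trans (hUW x₀ (Ioo_subset_Icc_self hx₀))
  have hσle : ∀ r, σ * r ≤ |r| := fun r => by simpa [abs_mul, hσ] using le_abs_self (σ * r)
  have hnhds : Ioo 0 L ∈ 𝓝 x₀ := isOpen_Ioo.mem_nhds hx₀
  have hmax : IsLocalMax (fun x => σ * U x) x₀ := by
    filter_upwards [hnhds] with x hx
    exact hσU ▸ (hσle _).trans (hUW x (Ioo_subset_Icc_self hx))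
  have hUx : σ * Ux x₀ = 0 := hmax.hasDerivAt_eq_zero ((hU' x₀ hx₀).const_mul σ)
  have hUxx : σ * Uxx x₀ ≤ 0 :=
    hmax.hasDerivAt_nonpos_of_hasDerivAt (f' := fun x => σ * Ux x)
      (eventually_of_mem hnhds fun x hx => (hU' x hx).const_mul σ) ((hU'' x₀ hx₀).const_mul σ)
  have hVW : |V x₀| ≤ W :=
    elliptic_max_principle_abs (sq_nonneg α) hV hV'' hell
      (fun x hx => hUW x (Ioo_subset_Icc_self hx)) (by simpa [hV0]) (by simpa [hVL]) x₀
      (Ioo_subset_Icc_self hx₀)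
  have hsource : -(σ * V x₀) * y ≤ W * A :=
    calc -(σ * V x₀) * y ≤ |V x₀| * |y| := by
          simpa [abs_mul, hσ] using le_abs_self (-(σ * V x₀) * y)
      _ ≤ W * A := mul_le_mul hVW hy (abs_nonneg _) hW
  have hpde : σ * ut = σ * Uxx x₀ - z * (σ * Ux x₀) + -(σ * V x₀) * y := by
    linear_combination σ * heq
  rw [hUx, mul_zero, sub_zero] at hpde
  linarith

theorem abs_le_exp_barrier {T L α ε : ℝ} {zα u ut ux uxx v vxx yhatx : ℝ → ℝ → ℝ}
    {a Φ : ℝ → ℝ} (hε : 0 < ε) (hΦc : Continuous Φ)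
    (hΦ : ∀ t ∈ Ioo 0 T, ∀ᶠ s in 𝓝[<] t, a t ≤ slope Φ t s)
    (hya : ∀ t ∈ Ioo 0 T, ∀ x ∈ Icc 0 L, |yhatx t x| ≤ a t)
    (huc : ContinuousOn (fun p : ℝ × ℝ => u p.1 p.2) (Icc 0 T ×ˢ Icc 0 L))
    (hvc : ContinuousOn (fun p : ℝ × ℝ => v p.1 p.2) (Icc 0 T ×ˢ Icc 0 L))
    (hut : ∀ t ∈ Ioo 0 T, ∀ x ∈ Ioo 0 L, HasDerivAt (fun τ => u τ x) (ut t x) t)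
    (hux : ∀ t ∈ Ioo 0 T, ∀ x ∈ Ioo 0 L, HasDerivAt (u t) (ux t x) x)
    (huxx : ∀ t ∈ Ioo 0 T, ∀ x ∈ Ioo 0 L, HasDerivAt (ux t) (uxx t x) x)
    (hvxx : ∀ t ∈ Ioo 0 T, ∀ x ∈ Ioo 0 L, HasDerivAt (deriv (v t)) (vxx t x) x)
    (heq : ∀ t ∈ Ioo 0 T, ∀ x ∈ Ioo 0 L,
      ut t x - uxx t x + zα t x * ux t x = -(v t x) * yhatx t x)
    (hell : ∀ t ∈ Ioo 0 T, ∀ x ∈ Ioo 0 L, v t x - α ^ 2 * vxx t x = u t x)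
    (hub : ∀ t ∈ Icc 0 T, u t 0 = 0 ∧ u t L = 0)
    (hvb : ∀ t ∈ Icc 0 T, v t 0 = 0 ∧ v t L = 0)
    (hu0 : ∀ x ∈ Icc 0 L, u 0 x = 0) :
    ∀ t ∈ Ico 0 T, ∀ x ∈ Icc 0 L, |u t x| ≤ ε * exp (t + Φ t) := by
  set w : ℝ → ℝ := fun t => ε * exp (t + Φ t)
  have hwpos : ∀ t, 0 < w t := fun t => by positivity
  intro t₁ ht₁ x₁ hx₁
  by_contra! hlt
  obtain ⟨t₀, ht₀, hbefore, hat, x₀, hx₀, htouch⟩ :=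
    exists_first_nonneg (F := fun t x => |u t x| - w t) isCompact_Icc
      ((huc.mono (prod_mono (Icc_subset_Icc_right ht₁.2.le) subset_rfl)).abs.sub
        (by fun_prop : Continuous fun p : ℝ × ℝ => w p.1).continuousOn)
      (fun x hx => by simp [hu0 x hx, hwpos]) ⟨ht₁.1, le_rfl⟩ hx₁ (by linarith)
  simp only [sub_nonpos, sub_neg, sub_eq_zero] at hbefore hat htouch
  have ht₀T : t₀ ∈ Ioo 0 T := ⟨ht₀.1, ht₀.2.trans_lt ht₁.2⟩
  have ht₀T' : t₀ ∈ Icc 0 T := Ioo_subset_Icc_self ht₀T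
  have hx₀' : x₀ ∈ Ioo 0 L := by
    refine ⟨hx₀.1.lt_of_ne ?_, hx₀.2.lt_of_ne ?_⟩ <;> rintro rfl <;>
      simp [(hub t₀ ht₀T').1, (hub t₀ ht₀T').2, (hwpos t₀).ne] at htouch
  obtain ⟨σ, hσ, hσu⟩ : ∃ σ : ℝ, |σ| = 1 ∧ σ * u t₀ x₀ = w t₀ := by
    rcases abs_choice (u t₀ x₀) with h | h
    · exact ⟨1, abs_one, by rw [one_mul, ← h, htouch]⟩
    · exact ⟨-1, by simp, by rw [← htouch, h]; ring⟩
  have hut₀ : w t₀ * (1 + a t₀) ≤ σ * ut t₀ x₀ := by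
    refine mul_exp_barrier_le_of_hasDerivAt hε.le ((hut t₀ ht₀T x₀ hx₀').const_mul σ)
      hΦc.continuousAt (hΦ t₀ ht₀T) ?_ hσu
    filter_upwards [Ioo_mem_nhdsLT ht₀.1] with s hs
    have hσle : σ * u s x₀ ≤ |u s x₀| := by
      simpa [abs_mul, hσ] using le_abs_self (σ * u s x₀)
    exact hσle.trans (hbefore s ⟨hs.1.le, hs.2⟩ x₀ hx₀).le
  have hut₀' : σ * ut t₀ x₀ ≤ w t₀ * a t₀ :=
    touching_point_time_deriv_le (hux t₀ ht₀T) (huxx t₀ ht₀T) (hvc.uncurry_left t₀ ht₀T')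
      (hvxx t₀ ht₀T) (hell t₀ ht₀T) (hvb t₀ ht₀T').1 (hvb t₀ ht₀T').2 hat hx₀' hσ hσu
      (hya t₀ ht₀T x₀ hx₀) (heq t₀ ht₀T x₀ hx₀')
  linarith [hwpos t₀, mul_add (w t₀) 1 (a t₀)]

theorem burgers_alpha_uniqueness_general
    (T L α : ℝ) (hT : 0 < T)
    (zα : ℝ → ℝ → ℝ)
    (u ut ux uxx v vxx yhatx : ℝ → ℝ → ℝ)
    -- ŷ ∈ L²(0,T;H²(0,L)) ↪ L²(0,T;C¹([0,L])): integrable control of ‖ŷ_x(t,·)‖_∞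
    (a : ℝ → ℝ) (ha : IntervalIntegrable a MeasureTheory.volume 0 T)
    (hya : ∀ t ∈ Ioo 0 T, ∀ x ∈ Icc 0 L, |yhatx t x| ≤ a t)
    -- regularity of u, v
    (huc : ContinuousOn (fun p : ℝ × ℝ => u p.1 p.2) (Icc 0 T ×ˢ Icc 0 L))
    (hvc : ContinuousOn (fun p : ℝ × ℝ => v p.1 p.2) (Icc 0 T ×ˢ Icc 0 L))
    (hut : ∀ t ∈ Ioo 0 T, ∀ x ∈ Ioo 0 L, HasDerivAt (fun τ => u τ x) (ut t x) t)
    (hux : ∀ t ∈ Ioo 0 T, ∀ x ∈ Ioo 0 L, HasDerivAt (u t) (ux t x) x)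
    (huxx : ∀ t ∈ Ioo 0 T, ∀ x ∈ Ioo 0 L, HasDerivAt (ux t) (uxx t x) x)
    (hvxx : ∀ t ∈ Ioo 0 T, ∀ x ∈ Ioo 0 L, HasDerivAt (deriv (v t)) (vxx t x) x)
    -- the coupled system
    (heq : ∀ t ∈ Ioo 0 T, ∀ x ∈ Ioo 0 L,
      ut t x - uxx t x + zα t x * ux t x = -(v t x) * yhatx t x)
    (hell : ∀ t ∈ Ioo 0 T, ∀ x ∈ Ioo 0 L, v t x - α ^ 2 * vxx t x = u t x)
    -- homogeneous boundary and initial conditions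
    (hub : ∀ t ∈ Icc 0 T, u t 0 = 0 ∧ u t L = 0)
    (hvb : ∀ t ∈ Icc 0 T, v t 0 = 0 ∧ v t L = 0)
    (hu0 : ∀ x ∈ Icc 0 L, u 0 x = 0) :
    ∀ t ∈ Icc 0 T, ∀ x ∈ Icc 0 L, u t x = 0 ∧ v t x = 0 := by
  obtain ⟨Φ, hΦc, hΦ⟩ := exists_continuous_le_slope_left
    (((intervalIntegrable_iff_integrableOn_Ioc_of_le hT.le).1 ha).integrable_indicator
      measurableSet_Ioc)
  have hΦa : ∀ t ∈ Ioo 0 T, ∀ᶠ s in 𝓝[<] t, a t ≤ slope Φ t s := fun t ht => by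
    simpa [indicator_of_mem (Ioo_subset_Ioc_self ht)] using hΦ t
  have huIoo : ∀ t ∈ Ioo 0 T, ∀ x ∈ Icc 0 L, u t x = 0 := fun t ht x hx => by
    have hlim : Tendsto (fun ε => ε * exp (t + Φ t)) (𝓝[>] 0) (𝓝 0) :=
      ((continuous_mul_const _).tendsto' 0 0 (zero_mul _)).mono_left nhdsWithin_le_nhds
    refine abs_nonpos_iff.1 (ge_of_tendsto hlim (eventually_nhdsWithin_of_forall fun ε hε =>
      abs_le_exp_barrier hε hΦc hΦa hya huc hvc hut hux huxx hvxx heq hell hub hvb hu0 t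
        (Ioo_subset_Ico_self ht) x hx))
  have hu := huc.eq_zero_of_eq_zero_on_Ioo_prod hT huIoo
  have hvIoo : ∀ t ∈ Ioo 0 T, ∀ x ∈ Icc 0 L, v t x = 0 := fun t ht x hx =>
    abs_nonpos_iff.1 <| elliptic_max_principle_abs (sq_nonneg α)
      (hvc.uncurry_left t (Ioo_subset_Icc_self ht)) (hvxx t ht) (hell t ht)
      (fun y hy => by simp [hu t (Ioo_subset_Icc_self ht) y (Ioo_subset_Icc_self hy)])
      (by simp [(hvb t (Ioo_subset_Icc_self ht)).1])
      (by simp [(hvb t (Ioo_subset_Icc_self ht)).2])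
      x hx
  exact fun t ht x hx => ⟨hu t ht x hx, hvc.eq_zero_of_eq_zero_on_Ioo_prod hT hvIoo t ht x hx⟩

/-- uniqueness lemma for the viscous Burgers-α system: if `u` solves
`u_t - u_xx + z^α u_x = -v ŷ_x` with homogeneous Dirichlet data and `u(0,·)=0`, where
`v - α² v_xx = u` with homogeneous Dirichlet data and `ŷ ∈ L²(0,T;H²(0,L))`, then
`u ≡ 0` and `v ≡ 0`. -/
theorem burgers_alpha_uniqueness
    (T L α : ℝ) (hT : 0 < T) (hL : 0 < L) (hα : 0 < α)
    (zα : ℝ → ℝ → ℝ) (M : ℝ) (hz : ∀ t ∈ Icc 0 T, ∀ x ∈ Icc 0 L, |zα t x| ≤ M)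
    (u ut ux uxx v vxx yhatx : ℝ → ℝ → ℝ)
    -- ŷ ∈ L²(0,T;H²(0,L)) ↪ L²(0,T;C¹([0,L])): integrable control of ‖ŷ_x(t,·)‖_∞
    (a : ℝ → ℝ) (ha : IntervalIntegrable a MeasureTheory.volume 0 T)
    (hya : ∀ t ∈ Ioo 0 T, ∀ x ∈ Icc 0 L, |yhatx t x| ≤ a t)
    -- regularity of u, v
    (huc : ContinuousOn (fun p : ℝ × ℝ => u p.1 p.2) (Icc 0 T ×ˢ Icc 0 L))
    (hvc : ContinuousOn (fun p : ℝ × ℝ => v p.1 p.2) (Icc 0 T ×ˢ Icc 0 L))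
    (hut : ∀ t ∈ Ioo 0 T, ∀ x ∈ Ioo 0 L, HasDerivAt (fun τ => u τ x) (ut t x) t)
    (hux : ∀ t ∈ Ioo 0 T, ∀ x ∈ Ioo 0 L, HasDerivAt (u t) (ux t x) x)
    (huxx : ∀ t ∈ Ioo 0 T, ∀ x ∈ Ioo 0 L, HasDerivAt (ux t) (uxx t x) x)
    (hvxx : ∀ t ∈ Ioo 0 T, ∀ x ∈ Ioo 0 L, HasDerivAt (deriv (v t)) (vxx t x) x)
    -- the coupled system
    (heq : ∀ t ∈ Ioo 0 T, ∀ x ∈ Ioo 0 L,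
      ut t x - uxx t x + zα t x * ux t x = -(v t x) * yhatx t x)
    (hell : ∀ t ∈ Ioo 0 T, ∀ x ∈ Ioo 0 L, v t x - α ^ 2 * vxx t x = u t x)
    -- homogeneous boundary and initial conditions
    (hub : ∀ t ∈ Icc 0 T, u t 0 = 0 ∧ u t L = 0)
    (hvb : ∀ t ∈ Icc 0 T, v t 0 = 0 ∧ v t L = 0)
    (hu0 : ∀ x ∈ Icc 0 L, u 0 x = 0) :
    ∀ t ∈ Icc 0 T, ∀ x ∈ Icc 0 L, u t x = 0 ∧ v t x = 0 :=
  burgers_alpha_uniqueness_general T L α hT zα u ut ux uxx v vxx yhatx a ha hya huc hvc hut hux huxx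
    hvxx heq hell hub hvb hu0
end
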